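/- arXiv:1702.04099 — 6 statements merged into one kernel-verified Lean document; each statement's English description precedes it below -/
import Mathlib

section
/- For every integer m ≥ 0 and every real x ≠ 0, (1/2)·∫_0^1 σ^{2m}·log( (1 + x²)/(σ² + x²) ) dσ = f_{2m+1}(x), and for x = 0 the left-hand side equals 1/(2m+1)². -/
/-!
For `x ≠ 0`, integrating by parts against `σ ^ (2m+1)` turns the logarithm into the rational
function `2 σ ^ (2m+2) / (σ² + x²)`; dividing `σ ^ (2m+2)` by `σ² + x²` (a geometric sum in
`σ²` and `-x²`) leaves an odd polynomial plus a multiple of `x / (σ² + x²)`, whose primitive is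
`x ^ (2m+1) arctan (σ / x)`. This gives the explicit primitive `logRatioPrimitive`. For `x = 0`
the integrand is `-2 σ ^ (2m) log σ`, and `∫₀¹ σⁿ log σ = -1 / (n+1)²`.
-/

open MeasureTheory

/-- The function `f_{2m+1}`. -/
noncomputable def f2m1 (m : ℕ) (x : ℝ) : ℝ :=
  if x = 0 then 1 / (2 * (m : ℝ) + 1) ^ 2
  else (1 / (2 * (m : ℝ) + 1)) *
    ((-1) ^ (m + 1) * x ^ (2 * m + 1) * Real.arctan (1 / x)
      + ∑ k ∈ Finset.range (m + 1), ((-1) ^ (m - k) / (2 * (k : ℝ) + 1)) * x ^ (2 * m - 2 * k))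

open Real Finset

lemma hasDerivAt_pow_mul_log_primitive (n : ℕ) {σ : ℝ} (hσ : σ ≠ 0) :
    HasDerivAt (fun t : ℝ => t ^ (n + 1) * log t / (n + 1) - t ^ (n + 1) / (n + 1) ^ 2)
      (σ ^ n * log σ) σ := by
  refine (((hasDerivAt_pow (n + 1) σ).fun_mul (hasDerivAt_log hσ)).div_const ((n : ℝ) + 1)
    |>.fun_sub ((hasDerivAt_pow (n + 1) σ).div_const (((n : ℝ) + 1) ^ 2))).congr_deriv ?_
  push_cast
  field_simp
  ring

theorem integral_pow_mul_log (n : ℕ) : ∫ σ in (0 : ℝ)..1, σ ^ n * log σ = -1 / (n + 1) ^ 2 := by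
  have hcont :
      Continuous fun t : ℝ => t ^ (n + 1) * log t / (n + 1) - t ^ (n + 1) / (n + 1) ^ 2 := by
    have h : (fun t : ℝ => t ^ (n + 1) * log t) = fun t => t ^ n * (t * log t) := by
      ext t; ring
    have hc : Continuous fun t : ℝ => t ^ (n + 1) * log t := by
      rw [h]
      exact (continuous_pow n).mul continuous_mul_log
    exact (hc.div_const _).sub ((continuous_pow _).div_const _)
  rw [intervalIntegral.integral_eq_sub_of_hasDerivAt_of_le zero_le_one hcont.continuousOn
    (fun σ hσ => hasDerivAt_pow_mul_log_primitive n hσ.1.ne')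
    (intervalIntegral.intervalIntegrable_log'.continuousOn_mul (continuous_pow n).continuousOn)]
  simp [neg_div]

theorem integral_pow_mul_log_ratio_zero (n : ℕ) :
    ∫ σ in (0 : ℝ)..1, σ ^ n * log ((1 + 0 ^ 2) / (σ ^ 2 + 0 ^ 2)) = 2 / (n + 1) ^ 2 := by
  -- also at `σ = 0`, where both logarithms are `log 0 = 0`
  have h (σ : ℝ) : σ ^ n * log ((1 + 0 ^ 2) / (σ ^ 2 + 0 ^ 2)) = -2 * (σ ^ n * log σ) := by
    simp only [zero_pow two_ne_zero, add_zero, one_div, log_inv, log_pow]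
    push_cast
    ring
  simp_rw [h, intervalIntegral.integral_const_mul, integral_pow_mul_log]
  ring

lemma hasDerivAt_arctan_div {x : ℝ} (hx : x ≠ 0) (σ : ℝ) :
    HasDerivAt (fun t => arctan (t / x)) (x / (σ ^ 2 + x ^ 2)) σ := by
  refine ((hasDerivAt_id σ).div_const x).arctan.congr_deriv ?_
  simp only [id]
  field_simp
  ring

lemma hasDerivAt_sum_odd_pow (c : ℕ → ℝ) (n : ℕ) (σ : ℝ) :
    HasDerivAt (fun t => ∑ j ∈ range n, c j / (2 * j + 1) * t ^ (2 * j + 1))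
      (∑ j ∈ range n, c j * σ ^ (2 * j)) σ := by
  refine HasDerivAt.fun_sum fun j _ => ?_
  refine ((hasDerivAt_pow (2 * j + 1) σ).const_mul (c j / (2 * j + 1))).congr_deriv ?_
  push_cast
  field_simp

noncomputable def logRatioPrimitive (m : ℕ) (x σ : ℝ) : ℝ :=
  σ ^ (2 * m + 1) * (log (1 + x ^ 2) - log (σ ^ 2 + x ^ 2))
    + 2 * ∑ j ∈ range (m + 1), (-x ^ 2) ^ (m - j) / (2 * j + 1) * σ ^ (2 * j + 1)
    + 2 * (-1) ^ (m + 1) * x ^ (2 * m + 1) * arctan (σ / x)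

lemma hasDerivAt_logRatioPrimitive (m : ℕ) {x : ℝ} (hx : x ≠ 0) (σ : ℝ) :
    HasDerivAt (logRatioPrimitive m x)
      ((2 * m + 1) * (σ ^ (2 * m) * log ((1 + x ^ 2) / (σ ^ 2 + x ^ 2)))) σ := by
  have hpos : 0 < σ ^ 2 + x ^ 2 := by positivity
  have hlog : HasDerivAt (fun t => log (t ^ 2 + x ^ 2)) (2 * σ / (σ ^ 2 + x ^ 2)) σ := by
    simpa using ((hasDerivAt_pow 2 σ).add_const (x ^ 2)).log hpos.ne'
  have h := (((hasDerivAt_pow (2 * m + 1) σ).fun_mul (hlog.const_sub (log (1 + x ^ 2)))).fun_add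
    ((hasDerivAt_sum_odd_pow (fun j => (-x ^ 2) ^ (m - j)) (m + 1) σ).const_mul 2)).fun_add
    ((hasDerivAt_arctan_div hx σ).const_mul (2 * (-1) ^ (m + 1) * x ^ (2 * m + 1)))
  -- polynomial division of `σ ^ (2m+2)` by `σ² + x²`
  have hdiv := geom_sum₂_mul (σ ^ 2) (-x ^ 2) (m + 1)
  simp only [← pow_mul, Nat.add_sub_cancel, mul_comm (σ ^ (2 * _))] at hdiv
  refine h.congr_deriv ?_
  rw [log_div (by positivity) hpos.ne']
  push_cast
  field_simp
  linear_combination 2 * hdiv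

lemma logRatioPrimitive_zero (m : ℕ) (x : ℝ) : logRatioPrimitive m x 0 = 0 := by
  simp [logRatioPrimitive]

lemma logRatioPrimitive_one (m : ℕ) (x : ℝ) :
    logRatioPrimitive m x 1 = 2 * ((-1) ^ (m + 1) * x ^ (2 * m + 1) * arctan (1 / x)
      + ∑ k ∈ range (m + 1), ((-1) ^ (m - k) / (2 * (k : ℝ) + 1)) * x ^ (2 * m - 2 * k)) := by
  have hsum : ∀ k ∈ range (m + 1), (-x ^ 2) ^ (m - k) / (2 * (k : ℝ) + 1) * 1 ^ (2 * k + 1) =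
      ((-1) ^ (m - k) / (2 * (k : ℝ) + 1)) * x ^ (2 * m - 2 * k) := by
    intro k hk
    have hkm : 2 * m - 2 * k = 2 * (m - k) := by
      have := mem_range.mp hk
      omega
    rw [neg_pow, hkm, pow_mul]
    ring
  rw [logRatioPrimitive, sum_congr rfl hsum]
  simp only [one_pow, sub_self, mul_zero, zero_add]
  ring

theorem integral_pow_mul_log_ratio_of_ne_zero (m : ℕ) {x : ℝ} (hx : x ≠ 0) :
    ∫ σ in (0 : ℝ)..1, σ ^ (2 * m) * log ((1 + x ^ 2) / (σ ^ 2 + x ^ 2)) =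
      logRatioPrimitive m x 1 / (2 * m + 1) := by
  have hpos (σ : ℝ) : 0 < σ ^ 2 + x ^ 2 := by positivity
  have hcont : Continuous fun σ : ℝ => σ ^ (2 * m) * log ((1 + x ^ 2) / (σ ^ 2 + x ^ 2)) :=
    (continuous_pow _).mul ((continuous_const.div (by fun_prop) fun σ => (hpos σ).ne').log
      fun σ => (div_pos (by positivity) (hpos σ)).ne')
  rw [intervalIntegral.integral_eq_sub_of_hasDerivAt
    (f := fun σ => logRatioPrimitive m x σ / (2 * m + 1))
    (fun σ _ => ((hasDerivAt_logRatioPrimitive m hx σ).div_const _).congr_deriv (by field_simp))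
    (hcont.intervalIntegrable 0 1), logRatioPrimitive_zero]
  simp

theorem stmt_9 (m : ℕ) (x : ℝ) :
    (1 / 2) * ∫ σ in (0 : ℝ)..1, σ ^ (2 * m) * Real.log ((1 + x ^ 2) / (σ ^ 2 + x ^ 2)) =
      f2m1 m x := by
  rcases eq_or_ne x 0 with rfl | hx
  · rw [f2m1, if_pos rfl, integral_pow_mul_log_ratio_zero]
    push_cast
    ring
  · rw [f2m1, if_neg hx, integral_pow_mul_log_ratio_of_ne_zero m hx, logRatioPrimitive_one]
    ring
end

section
/- For every integer m ≥ 0, the function f_{2m+1} is integrable on ℝ and ∫_{-∞}^{∞} f_{2m+1}(x) dx = π/((2m+1)(2m+2)). -/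
open MeasureTheory

/-!
For `x ≠ 0`, dividing `u ^ (2m+2)` by `x² + u²` (a geometric sum in `u²` and `-x²`) and using
`∫₀¹ du / (x² + u²) = arctan (1/x) / x` gives
`f_{2m+1}(x) = (2m+1)⁻¹ ∫₀¹ u ^ (2m+2) / (x² + u²) du`.
The kernel is nonnegative and its integral over `x ∈ ℝ` is `π u ^ (2m+1)`, so Fubini–Tonelli
gives integrability of `f_{2m+1}` and `∫ f_{2m+1} = (2m+1)⁻¹ ∫₀¹ π u ^ (2m+1) du`.
-/

open Real Finset

lemma pow_div_sq_add_sq_eq_sum_add {K : Type*} [Field K] (m : ℕ) {x u : K}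
    (h : x ^ 2 + u ^ 2 ≠ 0) :
    u ^ (2 * m + 2) / (x ^ 2 + u ^ 2)
      = ∑ k ∈ range (m + 1), u ^ (2 * k) * (-x ^ 2) ^ (m - k)
        + (-x ^ 2) ^ (m + 1) / (x ^ 2 + u ^ 2) := by
  have hgeom := geom_sum₂_mul (u ^ 2) (-x ^ 2) (m + 1)
  simp only [Nat.add_sub_cancel, ← pow_mul] at hgeom
  rw [← sub_eq_iff_eq_add, ← sub_div, div_eq_iff h]
  linear_combination (-1 : K) * hgeom

lemma inv_sq_add_sq_eq {x c : ℝ} (hc : c ≠ 0) :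
    (x ^ 2 + c ^ 2)⁻¹ = (c ^ 2)⁻¹ * (1 + (x / c) ^ 2)⁻¹ := by
  field_simp
  ring

lemma integrable_inv_sq_add_sq {c : ℝ} (hc : c ≠ 0) :
    Integrable fun x : ℝ ↦ (x ^ 2 + c ^ 2)⁻¹ := by
  simp_rw [inv_sq_add_sq_eq hc]
  exact (integrable_inv_one_add_sq.comp_div hc).const_mul _

lemma integral_univ_inv_sq_add_sq {c : ℝ} (hc : c ≠ 0) :
    ∫ x : ℝ, (x ^ 2 + c ^ 2)⁻¹ = π / |c| := by
  simp_rw [inv_sq_add_sq_eq hc]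
  rw [integral_const_mul, Measure.integral_comp_div (fun y ↦ (1 + y ^ 2)⁻¹),
    integral_univ_inv_one_add_sq, smul_eq_mul, ← sq_abs c]
  field_simp

noncomputable def f2m1Kernel (m : ℕ) (x u : ℝ) : ℝ := u ^ (2 * m + 2) / (x ^ 2 + u ^ 2)

lemma f2m1_eq_integral_kernel (m : ℕ) {x : ℝ} (hx : x ≠ 0) :
    f2m1 m x = (2 * (m : ℝ) + 1)⁻¹ * ∫ u in (0 : ℝ)..1, f2m1Kernel m x u := by
  have hsplit : ∀ u, f2m1Kernel m x u
      = ∑ k ∈ range (m + 1), u ^ (2 * k) * (-x ^ 2) ^ (m - k)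
        + (-x ^ 2) ^ (m + 1) * (x ^ 2 + u ^ 2)⁻¹ := fun u ↦
    pow_div_sq_add_sq_eq_sum_add m (by positivity)
  have hsum : IntervalIntegrable
      (fun u : ℝ ↦ ∑ k ∈ range (m + 1), u ^ (2 * k) * (-x ^ 2) ^ (m - k)) volume 0 1 := by
    apply Continuous.intervalIntegrable; fun_prop
  have hinv : IntervalIntegrable
      (fun u : ℝ ↦ (-x ^ 2) ^ (m + 1) * (x ^ 2 + u ^ 2)⁻¹) volume 0 1 := by
    apply Continuous.intervalIntegrable
    exact continuous_const.mul <| by fun_prop (disch := intro u; positivity)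
  simp_rw [hsplit]
  rw [intervalIntegral.integral_add hsum hinv, intervalIntegral.integral_finsetSum
      fun k _ ↦ by apply Continuous.intervalIntegrable; fun_prop]
  simp_rw [intervalIntegral.integral_mul_const, intervalIntegral.integral_const_mul, integral_pow,
    integral_inv_sq_add_sq hx]
  simp only [f2m1, if_neg hx, one_pow, zero_div, arctan_zero, sub_zero, one_div]
  rw [add_comm ((-1) ^ (m + 1) * _ * _)]
  congr 2
  · refine sum_congr rfl fun k _ ↦ ?_
    have hkm : 2 * m - 2 * k = 2 * (m - k) := by omega
    rw [zero_pow (by omega), neg_pow, hkm, pow_mul]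
    push_cast
    ring
  · rw [neg_pow (x ^ 2), ← pow_mul]
    field_simp
    ring

lemma f2m1Kernel_nonneg (m : ℕ) (x u : ℝ) : 0 ≤ f2m1Kernel m x u := by
  have : 0 ≤ u ^ (2 * m + 2) := Even.pow_nonneg ⟨m + 1, by ring⟩ u
  exact div_nonneg this (by positivity)

lemma integrable_f2m1Kernel_left (m : ℕ) {u : ℝ} (hu : u ≠ 0) :
    Integrable fun x ↦ f2m1Kernel m x u :=
  (integrable_inv_sq_add_sq hu).const_mul _

lemma integral_f2m1Kernel_left (m : ℕ) {u : ℝ} (hu : 0 < u) :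
    ∫ x, f2m1Kernel m x u = π * u ^ (2 * m + 1) := by
  simp_rw [f2m1Kernel, div_eq_mul_inv]
  rw [integral_const_mul, integral_univ_inv_sq_add_sq hu.ne', abs_of_pos hu]
  field_simp
  ring

lemma integrable_f2m1Kernel (m : ℕ) :
    Integrable (Function.uncurry (f2m1Kernel m)) (volume.prod (volume.restrict (Set.Ioc 0 1))) := by
  have hmeas : AEStronglyMeasurable (Function.uncurry (f2m1Kernel m))
      (volume.prod (volume.restrict (Set.Ioc 0 1))) :=
    Measurable.aestronglyMeasurable <| by unfold f2m1Kernel; fun_prop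
  refine (integrable_prod_iff' hmeas).2 ⟨?_, ?_⟩
  · filter_upwards [ae_restrict_mem measurableSet_Ioc] with u hu
    exact integrable_f2m1Kernel_left m hu.1.ne'
  · have hcont : IntegrableOn (fun u : ℝ ↦ π * u ^ (2 * m + 1)) (Set.Ioc 0 1) :=
      (by fun_prop : Continuous fun u : ℝ ↦ π * u ^ (2 * m + 1)).integrableOn_Icc.mono_set
        Set.Ioc_subset_Icc_self
    refine hcont.congr_fun (fun u hu ↦ ?_) measurableSet_Ioc
    simp only [Function.uncurry_apply_pair, Real.norm_of_nonneg (f2m1Kernel_nonneg m _ u),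
      integral_f2m1Kernel_left m hu.1]

theorem stmt_10 (m : ℕ) :
    Integrable (f2m1 m) ∧
    ∫ x : ℝ, f2m1 m x = Real.pi / ((2 * (m : ℝ) + 1) * (2 * (m : ℝ) + 2)) := by
  have hK := integrable_f2m1Kernel m
  have hf : f2m1 m =ᵐ[volume]
      fun x ↦ (2 * (m : ℝ) + 1)⁻¹ * ∫ u in Set.Ioc 0 1, f2m1Kernel m x u := by
    filter_upwards [Measure.ae_ne volume 0] with x hx
    rw [f2m1_eq_integral_kernel m hx, intervalIntegral.integral_of_le zero_le_one]
  refine ⟨(hK.integral_prod_left.const_mul _).congr hf.symm, ?_⟩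
  rw [integral_congr_ae hf, integral_const_mul, integral_integral_swap hK,
    setIntegral_congr_fun measurableSet_Ioc fun u hu ↦ integral_f2m1Kernel_left m hu.1,
    integral_const_mul, ← intervalIntegral.integral_of_le zero_le_one, integral_pow]
  push_cast
  field_simp
  ring
end

section
/- For every integer m ≥ 0 and every real x with |x| > 1, f_{2m+1}(x) = (1/(2m+1))·Σ_{k=1}^{∞} (-1)^{k-1}/( (2k + 2m + 1)·x^{2k} ), the series converging absolutely. -/
open Real Finset

lemma mul_arctan_series_term_of_le {x : ℝ} (hx : x ≠ 0) {m n : ℕ} (h : n ≤ m) :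
    (-1 : ℝ) ^ (m + 1) * x ^ (2 * m + 1) *
      ((-1) ^ n * (1 / x) ^ (2 * n + 1) / ((2 * n + 1 : ℕ) : ℝ)) =
    -((-1 : ℝ) ^ (m - n) / (2 * (n : ℝ) + 1) * x ^ (2 * m - 2 * n)) := by
  obtain ⟨j, rfl⟩ := Nat.exists_eq_add_of_le h
  rw [show n + j - n = j by omega, show 2 * (n + j) - 2 * n = 2 * j by omega]
  have hsq : ((-1 : ℝ) ^ n) ^ 2 = 1 := by rw [← pow_mul, pow_mul']; simp
  have hxy : x ^ (2 * n + 1) * (1 / x) ^ (2 * n + 1) = 1 := by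
    rw [← mul_pow, mul_one_div_cancel hx, one_pow]
  push_cast
  linear_combination (-(-1 : ℝ) ^ j * x ^ (2 * j) / (2 * n + 1)) *
    (((-1 : ℝ) ^ n) ^ 2 * hxy + hsq)

lemma mul_arctan_series_term_add {x : ℝ} (hx : x ≠ 0) (m k : ℕ) :
    (-1 : ℝ) ^ (m + 1) * x ^ (2 * m + 1) *
      ((-1) ^ (k + (m + 1)) * (1 / x) ^ (2 * (k + (m + 1)) + 1) /
        ((2 * (k + (m + 1)) + 1 : ℕ) : ℝ)) =
    (-1 : ℝ) ^ k / ((2 * ((k : ℝ) + 1) + 2 * m + 1) * x ^ (2 * (k + 1))) := by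
  have hsq : ((-1 : ℝ) ^ (m + 1)) ^ 2 = 1 := by rw [← pow_mul, pow_mul']; simp
  have hxy : x ^ (2 * m + 1) * (1 / x) ^ (2 * m + 1) = 1 := by
    rw [← mul_pow, mul_one_div_cancel hx, one_pow]
  push_cast
  rw [mul_comm _ (x ^ _), ← div_div, div_eq_mul_one_div _ (x ^ _), ← one_div_pow]
  linear_combination
    ((-1 : ℝ) ^ k * (1 / x) ^ (2 * (k + 1)) / (2 * ((k : ℝ) + 1) + 2 * m + 1)) *
      (((-1 : ℝ) ^ (m + 1)) ^ 2 * hxy + hsq)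

lemma hasSum_tail_series {x : ℝ} (hx : 1 < |x|) (m : ℕ) :
    HasSum (fun k : ℕ => (-1 : ℝ) ^ k / ((2 * ((k : ℝ) + 1) + 2 * m + 1) * x ^ (2 * (k + 1))))
      ((-1) ^ (m + 1) * x ^ (2 * m + 1) * arctan (1 / x) +
        ∑ k ∈ range (m + 1), (-1) ^ (m - k) / (2 * (k : ℝ) + 1) * x ^ (2 * m - 2 * k)) := by
  have hx0 : x ≠ 0 := by rintro rfl; norm_num at hx
  have hy : ‖1 / x‖ < 1 := by
    rw [norm_div, norm_one, Real.norm_eq_abs, div_lt_one (by linarith)]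
    exact hx
  have hseries := (hasSum_arctan hy).mul_left ((-1 : ℝ) ^ (m + 1) * x ^ (2 * m + 1))
  rw [← hasSum_nat_add_iff' (m + 1)] at hseries
  simp only [mul_arctan_series_term_add hx0] at hseries
  rwa [sum_congr rfl fun n hn => mul_arctan_series_term_of_le hx0 (Nat.le_of_lt_succ
    (mem_range.mp hn)), sum_neg_distrib, sub_neg_eq_add] at hseries

lemma summable_abs_tail_series {x : ℝ} (hx : 1 < |x|) (m : ℕ) :
    Summable (fun k : ℕ =>
      |(-1 : ℝ) ^ k / ((2 * ((k : ℝ) + 1) + 2 * m + 1) * x ^ (2 * (k + 1)))|) := by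
  have hx2 : 1 < x ^ 2 := by rw [← sq_abs]; exact one_lt_pow₀ hx two_ne_zero
  have hpow (k : ℕ) : 0 < (x ^ 2) ^ k := pow_pos (by linarith) k
  have hgeom : Summable fun k : ℕ => (x ^ 2)⁻¹ * ((x ^ 2)⁻¹) ^ k :=
    (summable_geometric_of_lt_one (by positivity) (inv_lt_one_of_one_lt₀ hx2)).mul_left _
  refine hgeom.of_nonneg_of_le (fun k => abs_nonneg _) fun k => ?_
  have hd : 1 ≤ 2 * ((k : ℝ) + 1) + 2 * m + 1 := le_add_of_nonneg_left (by positivity)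
  rw [← pow_succ', inv_pow, pow_mul, abs_div, abs_neg_one_pow, abs_mul,
    abs_of_pos (by linarith), abs_of_pos (hpow _), ← one_div]
  exact one_div_le_one_div_of_le (hpow _) (le_mul_of_one_le_left (hpow _).le hd)

theorem stmt_11 (m : ℕ) (x : ℝ) (hx : 1 < |x|) :
    Summable (fun k : ℕ =>
      |(-1 : ℝ) ^ ((k + 1) - 1) / ((2 * ((k : ℝ) + 1) + 2 * m + 1) * x ^ (2 * (k + 1)))|) ∧
    f2m1 m x = (1 / (2 * (m : ℝ) + 1)) *
      ∑' k : ℕ, (-1 : ℝ) ^ ((k + 1) - 1) / ((2 * ((k : ℝ) + 1) + 2 * m + 1) * x ^ (2 * (k + 1))) := by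
  have hx0 : x ≠ 0 := by rintro rfl; norm_num at hx
  simp only [Nat.add_sub_cancel]
  refine ⟨summable_abs_tail_series hx m, ?_⟩
  rw [(hasSum_tail_series hx m).tsum_eq, f2m1, if_neg hx0]
end

section
/- For every integer m ≥ 0 there exists a constant C = C(m) > 0 such that for all real x with |x| ≥ 1: |f_{2m+1}(x)| ≤ C/x² and |f_{2m+1}'(x)| ≤ C/|x|³; moreover, if m ≥ 1, |f_{2m}(x)| ≤ C/|x|³ for all |x| ≥ 1. -/
/-- The function `f_{2m}`. -/
noncomputable def f2m (m : ℕ) (x : ℝ) : ℝ :=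
  if x = 0 then 0
  else (-1) ^ m * x ^ (2 * m) * Real.arctan (1 / x)
    + ∑ k ∈ Finset.range m, ((-1) ^ (m - k + 1) / (2 * (k : ℝ) + 1)) * x ^ (2 * m - 2 * k - 1)
    - x / ((2 * (m : ℝ) + 1) * (1 + x ^ 2))

open Finset

noncomputable def arctanRemainder (M : ℕ) (t : ℝ) : ℝ :=
  Real.arctan t - ∑ k ∈ range M, (-1) ^ k / (2 * k + 1) * t ^ (2 * k + 1)

namespace arctanRemainder

theorem hasDerivAt (M : ℕ) (t : ℝ) :
    HasDerivAt (arctanRemainder M) ((-t ^ 2) ^ M / (1 + t ^ 2)) t := by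
  have hterm (k : ℕ) : HasDerivAt (fun t : ℝ => (-1) ^ k / (2 * k + 1) * t ^ (2 * k + 1))
      ((-t ^ 2) ^ k) t := by
    refine ((hasDerivAt_pow (2 * k + 1) t).const_mul ((-1 : ℝ) ^ k / (2 * k + 1))).congr_deriv ?_
    rw [Nat.add_sub_cancel, neg_pow (t ^ 2), ← pow_mul]
    push_cast
    field_simp
  have hgeom : ∑ k ∈ range M, (-t ^ 2) ^ k = ((-t ^ 2) ^ M - 1) / (-t ^ 2 - 1) :=
    geom_sum_eq (by nlinarith [sq_nonneg t]) M
  have h : HasDerivAt (arctanRemainder M) _ t :=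
    (Real.hasDerivAt_arctan t).sub (HasDerivAt.fun_sum (u := range M) fun k _ => hterm k)
  refine h.congr_deriv ?_
  have hden : 1 + t ^ 2 ≠ 0 := by positivity
  rw [hgeom, show -t ^ 2 - 1 = -(1 + t ^ 2) by ring]
  field_simp
  ring

theorem zero_right (M : ℕ) : arctanRemainder M 0 = 0 := by
  simp [arctanRemainder]

theorem abs_deriv_le (M : ℕ) (u : ℝ) : |(-u ^ 2) ^ M / (1 + u ^ 2)| ≤ |u| ^ (2 * M) := by
  rw [abs_div, abs_pow, abs_neg, abs_pow, ← pow_mul,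
    abs_of_pos (by positivity : (0 : ℝ) < 1 + u ^ 2)]
  exact div_le_self (by positivity) (by nlinarith [sq_nonneg u])

theorem abs_le (M : ℕ) (t : ℝ) : |arctanRemainder M t| ≤ |t| ^ (2 * M + 1) := by
  have hball : ∀ s ∈ Metric.closedBall (0 : ℝ) |t|,
      |(-s ^ 2) ^ M / (1 + s ^ 2)| ≤ |t| ^ (2 * M) :=
    fun s hs => (abs_deriv_le M s).trans <| pow_le_pow_left₀ (abs_nonneg s) (by simpa using hs) _
  have := (convex_closedBall (0 : ℝ) |t|).norm_image_sub_le_of_norm_hasDerivWithin_le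
    (fun s _ => (hasDerivAt M s).hasDerivWithinAt) hball
    (Metric.mem_closedBall_self (abs_nonneg t)) (by simp [Metric.mem_closedBall] : t ∈ _)
  simpa [zero_right, pow_succ] using this

end arctanRemainder

theorem neg_one_pow_mul_self {R : Type*} [CommRing R] (n : ℕ) : (-1 : R) ^ n * (-1) ^ n = 1 := by
  rw [← mul_pow]
  simp

theorem neg_one_pow_sub {R : Type*} [CommRing R] {m k : ℕ} (h : k ≤ m) :
    (-1 : R) ^ (m - k) = (-1) ^ m * (-1) ^ k := by
  obtain ⟨j, rfl⟩ := Nat.exists_eq_add_of_le h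
  rw [Nat.add_sub_cancel_left, pow_add, mul_right_comm, neg_one_pow_mul_self, one_mul]

theorem pow_mul_inv_pow_succ {K : Type*} [Field K] {x : K} (hx : x ≠ 0) (n : ℕ) :
    x ^ n * x⁻¹ ^ (n + 1) = x⁻¹ := by
  rw [pow_succ, ← mul_assoc, ← mul_pow, mul_inv_cancel₀ hx, one_pow, one_mul]

theorem pow_mul_sum_mul_inv_pow {K : Type*} [Field K] {x : K} (hx : x ≠ 0) {N M : ℕ}
    (h : 2 * M ≤ N + 1) (c : ℕ → K) :
    x ^ N * ∑ k ∈ range M, c k * x⁻¹ ^ (2 * k + 1) =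
      ∑ k ∈ range M, c k * x ^ (N - (2 * k + 1)) := by
  rw [mul_sum]
  refine sum_congr rfl fun k hk => ?_
  rw [pow_sub₀ _ hx (by simp at hk; omega), inv_pow]
  ring

theorem f2m1_eq_arctanRemainder (m : ℕ) {x : ℝ} (hx : x ≠ 0) :
    f2m1 m x =
      (-1) ^ (m + 1) / (2 * m + 1) * (x ^ (2 * m + 1) * arctanRemainder (m + 1) x⁻¹) := by
  have hsum : ∑ k ∈ range (m + 1), (-1) ^ (m - k) / (2 * (k : ℝ) + 1) * x ^ (2 * m - 2 * k) =
      (-1) ^ m * (x ^ (2 * m + 1) *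
        ∑ k ∈ range (m + 1), (-1) ^ k / (2 * (k : ℝ) + 1) * x⁻¹ ^ (2 * k + 1)) := by
    rw [pow_mul_sum_mul_inv_pow hx (by omega), mul_sum]
    refine sum_congr rfl fun k hk => ?_
    rw [neg_one_pow_sub (by simp at hk; omega), Nat.add_sub_add_right]
    ring
  rw [f2m1, if_neg hx, arctanRemainder, one_div, hsum]
  ring_nf

theorem f2m_eq_arctanRemainder (m : ℕ) {x : ℝ} (hx : x ≠ 0) :
    f2m m x = (-1) ^ m * (x ^ (2 * m) * arctanRemainder (m + 1) x⁻¹)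
      + 1 / ((2 * m + 1) * (x * (1 + x ^ 2))) := by
  have hsum :
      ∑ k ∈ range m, (-1) ^ (m - k + 1) / (2 * (k : ℝ) + 1) * x ^ (2 * m - 2 * k - 1) =
      -(-1) ^ m * (x ^ (2 * m) *
        ∑ k ∈ range m, (-1) ^ k / (2 * (k : ℝ) + 1) * x⁻¹ ^ (2 * k + 1)) := by
    rw [pow_mul_sum_mul_inv_pow hx (by omega), mul_sum]
    refine sum_congr rfl fun k hk => ?_
    rw [pow_succ, neg_one_pow_sub (by simp at hk; omega), Nat.sub_sub]
    ring
  have hfrac : x⁻¹ / (2 * m + 1) - x / ((2 * m + 1) * (1 + x ^ 2))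
      - 1 / ((2 * m + 1) * (x * (1 + x ^ 2))) = 0 := by
    field_simp
    ring
  rw [f2m, if_neg hx, arctanRemainder, sum_range_succ, one_div, hsum]
  linear_combination
    x ^ (2 * m) * x⁻¹ ^ (2 * m + 1) / (2 * m + 1) * neg_one_pow_mul_self (R := ℝ) m
    + 1 / (2 * (m : ℝ) + 1) * pow_mul_inv_pow_succ hx (2 * m) + hfrac

theorem hasDerivAt_f2m1 (m : ℕ) {x : ℝ} (hx : x ≠ 0) : HasDerivAt (f2m1 m) (-f2m m x) x := by
  have hR : HasDerivAt (fun y => arctanRemainder (m + 1) y⁻¹)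
      ((-x⁻¹ ^ 2) ^ (m + 1) / (1 + x⁻¹ ^ 2) * -(x ^ 2)⁻¹) x :=
    (arctanRemainder.hasDerivAt (m + 1) x⁻¹).comp x (hasDerivAt_inv hx)
  have h := ((hasDerivAt_pow (2 * m + 1) x).mul hR).const_mul ((-1 : ℝ) ^ (m + 1) / (2 * m + 1))
  have hf : f2m1 m =ᶠ[nhds x] fun y =>
      (-1) ^ (m + 1) / (2 * m + 1) * (y ^ (2 * m + 1) * arctanRemainder (m + 1) y⁻¹) := by
    filter_upwards [eventually_ne_nhds hx] with y hy using f2m1_eq_arctanRemainder m hy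
  have hterm : x ^ (2 * m + 1) * ((-x⁻¹ ^ 2) ^ (m + 1) / (1 + x⁻¹ ^ 2) * -(x ^ 2)⁻¹) =
      (-1) ^ m / (x * (1 + x ^ 2)) := by
    rw [neg_pow (x⁻¹ ^ 2), ← pow_mul, show 2 * (m + 1) = 2 * m + 1 + 1 by ring]
    calc _ = (-1) ^ m * (x ^ (2 * m + 1) * x⁻¹ ^ (2 * m + 1 + 1)) / (1 + x⁻¹ ^ 2) / x ^ 2 :=
          by ring
      _ = _ := by
          rw [pow_mul_inv_pow_succ hx]
          field_simp
          ring
  refine (h.congr_of_eventuallyEq hf).congr_deriv ?_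
  rw [f2m_eq_arctanRemainder m hx, Nat.add_sub_cancel, hterm, pow_succ (-1 : ℝ) m]
  push_cast
  field_simp
  linear_combination -neg_one_pow_mul_self (R := ℝ) m

theorem abs_pow_mul_arctanRemainder_inv_le {x : ℝ} (hx : x ≠ 0) {N M : ℕ}
    (h : N ≤ 2 * M + 1) :
    |x ^ N * arctanRemainder M x⁻¹| ≤ |x|⁻¹ ^ (2 * M + 1 - N) := by
  rw [pow_sub₀ _ (inv_ne_zero (abs_ne_zero.2 hx)) h, inv_pow |x| N, inv_inv, mul_comm, abs_mul,
    abs_pow]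
  gcongr
  simpa using arctanRemainder.abs_le M x⁻¹

theorem abs_one_div_mul_mul_one_add_sq_le (c : ℝ) (hc : 1 ≤ c) {x : ℝ} (hx : x ≠ 0) :
    |1 / (c * (x * (1 + x ^ 2)))| ≤ |x|⁻¹ ^ 3 := by
  rw [abs_div, abs_one, abs_mul, abs_mul, abs_of_pos (by positivity : 0 < 1 + x ^ 2),
    abs_of_pos (by linarith : 0 < c), inv_pow, one_div]
  have hx_pos : 0 < |x| := abs_pos.2 hx
  gcongr
  calc |x| ^ 3 = |x| * x ^ 2 := by rw [← sq_abs x]; ring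
    _ ≤ 1 * (|x| * (1 + x ^ 2)) := by nlinarith
    _ ≤ c * (|x| * (1 + x ^ 2)) := by gcongr

theorem abs_f2m1_le (m : ℕ) {x : ℝ} (hx : x ≠ 0) : |f2m1 m x| ≤ 1 / x ^ 2 := by
  have hR := abs_pow_mul_arctanRemainder_inv_le hx (N := 2 * m + 1) (M := m + 1) (by omega)
  rw [show 2 * (m + 1) + 1 - (2 * m + 1) = 2 by omega, inv_pow, sq_abs, ← one_div (x ^ 2)] at hR
  have hc : 1 ≤ (2 * m + 1 : ℝ) := by linarith [m.cast_nonneg (α := ℝ)]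
  rw [f2m1_eq_arctanRemainder m hx, abs_mul, abs_div, abs_neg_one_pow, abs_of_pos (by linarith)]
  exact (mul_le_of_le_one_left (abs_nonneg _) (div_le_one_of_le₀ hc (by linarith))).trans hR

theorem abs_f2m_le (m : ℕ) {x : ℝ} (hx : x ≠ 0) : |f2m m x| ≤ 2 / |x| ^ 3 := by
  have hR := abs_pow_mul_arctanRemainder_inv_le hx (N := 2 * m) (M := m + 1) (by omega)
  rw [show 2 * (m + 1) + 1 - 2 * m = 3 by omega] at hR
  have hq := abs_one_div_mul_mul_one_add_sq_le (2 * m + 1)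
    (by linarith [m.cast_nonneg (α := ℝ)]) hx
  rw [f2m_eq_arctanRemainder m hx]
  calc _ ≤ |(-1) ^ m * (x ^ (2 * m) * arctanRemainder (m + 1) x⁻¹)|
        + |1 / ((2 * m + 1) * (x * (1 + x ^ 2)))| := abs_add_le _ _
    _ ≤ |x|⁻¹ ^ 3 + |x|⁻¹ ^ 3 := by
        rw [abs_mul, abs_neg_one_pow, one_mul]
        exact add_le_add hR hq
    _ = 2 / |x| ^ 3 := by rw [inv_pow]; ring

theorem stmt_12 (m : ℕ) :
    ∃ C > 0,
      (∀ x : ℝ, 1 ≤ |x| →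
        |f2m1 m x| ≤ C / x ^ 2 ∧ |deriv (f2m1 m) x| ≤ C / |x| ^ 3) ∧
      (1 ≤ m → ∀ x : ℝ, 1 ≤ |x| → |f2m m x| ≤ C / |x| ^ 3) := by
  have hx0 {x : ℝ} (hx : 1 ≤ |x|) : x ≠ 0 := abs_pos.1 (one_pos.trans_le hx)
  refine ⟨2, two_pos, fun x hx => ⟨?_, ?_⟩, fun _ x hx => abs_f2m_le m (hx0 hx)⟩
  · exact (abs_f2m1_le m (hx0 hx)).trans (by gcongr; norm_num)
  · rw [(hasDerivAt_f2m1 m (hx0 hx)).deriv, abs_neg]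
    exact abs_f2m_le m (hx0 hx)
end

section
/- For every integer m ≥ 0 and every real c > 0, ∫_0^∞ σ^{2m}·log(1 + e^{-cσ}) dσ = (2m)!·(1 - 2^{-2m-1})·ζ(2m+2)/c^{2m+1}. -/
/-!
Expand `log (1 + e^{-cσ}) = ∑_{k ≥ 0} (-1)^k e^{-(k+1)cσ} / (k+1)` and integrate termwise against
`σ^n`; this is legitimate because the integrals of the absolute values form a multiple of the
convergent series `ζ(n+2)`. The `k`-th term contributes `(-1)^k n! / ((k+1)^{n+2} c^{n+1})`, so the
integral is `n! / c^{n+1}` times the alternating zeta value `η(n+2) = (1 - 2^{-n-1}) ζ(n+2)`.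
-/

open MeasureTheory Real Set
open scoped Nat

lemma summable_one_div_nat_add_one_pow {s : ℕ} (hs : 1 < s) :
    Summable fun n : ℕ => 1 / ((n : ℝ) + 1) ^ s := by
  simpa using (summable_nat_add_iff 1).mpr (summable_one_div_nat_pow.mpr hs)

lemma hasSum_one_div_nat_add_one_pow_riemannZeta_re {s : ℕ} (hs : 1 < s) :
    HasSum (fun n : ℕ => 1 / ((n : ℝ) + 1) ^ s) (riemannZeta s).re := by
  have hζ : HasSum (fun n : ℕ => ((1 / ((n : ℝ) + 1) ^ s : ℝ) : ℂ)) (riemannZeta s) := by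
    rw [zeta_eq_tsum_one_div_nat_add_one_cpow (by simpa using hs)]
    convert (Complex.summable_ofReal.mpr (summable_one_div_nat_add_one_pow hs)).hasSum using 2
    push_cast
    simp only [Complex.cpow_natCast]
  exact_mod_cast Complex.hasSum_re hζ

/-- The odd-indexed terms of `ζ(s)` sum to `2^{-s} ζ(s)`, and `η(s)` is `ζ(s)` minus twice them. -/
lemma hasSum_neg_one_pow_div_nat_add_one_pow {s : ℕ} (hs : 1 < s) :
    HasSum (fun n : ℕ => (-1 : ℝ) ^ n / ((n : ℝ) + 1) ^ s)
      ((1 - 2 ^ (1 - (s : ℤ))) * (riemannZeta s).re) := by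
  set f : ℕ → ℝ := fun n => 1 / ((n : ℝ) + 1) ^ s
  have hf : HasSum f (riemannZeta s).re := hasSum_one_div_nat_add_one_pow_riemannZeta_re hs
  have hodd : HasSum (fun k => f (2 * k + 1)) (2 ^ (-(s : ℤ)) * (riemannZeta s).re) := by
    refine (hf.mul_left _).congr_fun fun k => ?_
    simp only [f, zpow_neg, zpow_natCast]
    push_cast
    rw [show (2 * (k : ℝ) + 1 + 1) = 2 * (k + 1) by ring, mul_pow]
    field_simp
  have heven : HasSum (fun k => f (2 * k)) _ :=
    (hf.summable.comp_injective (mul_right_injective₀ two_ne_zero)).hasSum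
  have hsplit := hf.unique (heven.even_add_odd hodd)
  have halt : HasSum (fun n : ℕ => (-1 : ℝ) ^ n / ((n : ℝ) + 1) ^ s) _ :=
    HasSum.even_add_odd (heven.congr_fun fun k => by simp [f, pow_mul])
      (hodd.neg.congr_fun fun k => by simp [f, pow_succ, pow_mul, neg_div])
  convert halt using 1
  rw [sub_mul, zpow_sub₀ two_ne_zero, zpow_one, div_eq_mul_inv, ← zpow_neg]
  linarith

lemma integral_pow_mul_exp_neg_mul_Ioi (n : ℕ) {a : ℝ} (ha : 0 < a) :
    ∫ t in Ioi 0, t ^ n * exp (-(a * t)) = n ! / a ^ (n + 1) := by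
  have h := integral_rpow_mul_exp_neg_mul_Ioi (a := n + 1) (by positivity) ha
  rw [add_sub_cancel_right, Real.Gamma_nat_eq_factorial, ← Nat.cast_add_one] at h
  simp only [rpow_natCast, one_div, inv_pow] at h
  rw [h, div_eq_inv_mul]

lemma integrableOn_pow_mul_exp_neg_mul_Ioi (n : ℕ) {a : ℝ} (ha : 0 < a) :
    IntegrableOn (fun t : ℝ => t ^ n * exp (-(a * t))) (Ioi 0) := by
  simpa using integrableOn_rpow_mul_exp_neg_mul_rpow (s := n) (p := 1)
    (by linarith [n.cast_nonneg (α := ℝ)]) one_pos ha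

lemma hasSum_log_one_add_of_abs_lt_one {x : ℝ} (hx : |x| < 1) :
    HasSum (fun k : ℕ => (-1) ^ k / (k + 1) * x ^ (k + 1)) (log (1 + x)) := by
  have h := (hasSum_pow_div_log_of_abs_lt_one (x := -x) (by rwa [abs_neg])).neg
  rw [sub_neg_eq_add, neg_neg] at h
  refine h.congr_fun fun k => ?_
  rw [neg_pow, pow_succ]
  ring

lemma hasSum_log_one_add_exp_neg {x : ℝ} (hx : 0 < x) :
    HasSum (fun k : ℕ => (-1) ^ k / (k + 1) * exp (-((k + 1) * x))) (log (1 + exp (-x))) := by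
  have h : |exp (-x)| < 1 := by rw [abs_of_pos (exp_pos _)]; exact exp_lt_one_iff.mpr (by linarith)
  refine (hasSum_log_one_add_of_abs_lt_one h).congr_fun fun k => ?_
  rw [← exp_nat_mul]
  push_cast
  ring_nf

lemma integral_pow_mul_log_one_add_exp_neg_mul (n : ℕ) {c : ℝ} (hc : 0 < c) :
    ∫ σ in Ioi 0, σ ^ n * log (1 + exp (-(c * σ))) =
      n ! / c ^ (n + 1) * ((1 - 2 ^ (1 - ((n + 2 : ℕ) : ℤ))) * (riemannZeta (n + 2 : ℕ)).re) := by
  set F : ℕ → ℝ → ℝ := fun k σ => (-1) ^ k / (k + 1) * (σ ^ n * exp (-((k + 1) * c * σ)))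
  have hF_int (k : ℕ) : Integrable (F k) (volume.restrict (Ioi 0)) :=
    (integrableOn_pow_mul_exp_neg_mul_Ioi n (by positivity)).const_mul _
  have hF_integral (k : ℕ) :
      ∫ σ in Ioi 0, F k σ = n ! / c ^ (n + 1) * ((-1) ^ k / ((k : ℝ) + 1) ^ (n + 2)) := by
    rw [integral_const_mul, integral_pow_mul_exp_neg_mul_Ioi n (by positivity), mul_pow]
    field_simp
    ring
  have hF_norm (k : ℕ) :
      ∫ σ in Ioi 0, ‖F k σ‖ = n ! / c ^ (n + 1) * (1 / ((k : ℝ) + 1) ^ (n + 2)) := by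
    have hF_norm_eq : ∀ σ ∈ Ioi (0 : ℝ),
        ‖F k σ‖ = 1 / (k + 1) * (σ ^ n * exp (-((k + 1) * c * σ))) := fun σ hσ => by
      rw [norm_mul, norm_div, norm_pow, norm_neg, norm_one, one_pow, norm_of_nonneg (by positivity),
        norm_of_nonneg (mul_nonneg (pow_nonneg (le_of_lt hσ) n) (exp_pos _).le)]
    rw [setIntegral_congr_fun measurableSet_Ioi hF_norm_eq, integral_const_mul,
      integral_pow_mul_exp_neg_mul_Ioi n (by positivity), mul_pow]
    field_simp
    ring
  have hF_summable : Summable fun k => ∫ σ in Ioi 0, ‖F k σ‖ := by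
    simp_rw [hF_norm]
    exact (summable_one_div_nat_add_one_pow (by omega)).mul_left _
  have hF_tsum : ∫ σ in Ioi 0, ∑' k, F k σ = ∫ σ in Ioi 0, σ ^ n * log (1 + exp (-(c * σ))) :=
    setIntegral_congr_fun measurableSet_Ioi fun σ hσ =>
      (((hasSum_log_one_add_exp_neg (mul_pos hc hσ)).mul_left (σ ^ n)).congr_fun
        fun k => by simp only [F]; ring_nf).tsum_eq
  have hF_sum := hasSum_integral_of_summable_integral_norm hF_int hF_summable
  rw [hF_tsum] at hF_sum
  simp_rw [hF_integral] at hF_sum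
  exact hF_sum.unique ((hasSum_neg_one_pow_div_nat_add_one_pow (by omega)).mul_left _)

theorem stmt_14 (m : ℕ) (c : ℝ) (hc : 0 < c) :
    ∫ σ in Set.Ioi (0 : ℝ), σ ^ (2 * m) * Real.log (1 + Real.exp (-(c * σ))) =
      (Nat.factorial (2 * m) : ℝ) * (1 - (2 : ℝ) ^ (-(2 * (m : ℤ)) - 1)) *
        (riemannZeta (2 * (m : ℂ) + 2)).re / c ^ (2 * m + 1) := by
  rw [integral_pow_mul_log_one_add_exp_neg_mul (2 * m) hc]
  push_cast
  rw [show (1 : ℤ) - (2 * m + 2) = -(2 * m) - 1 by ring]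
  ring
end

section
/- Let n ≥ 2 be an integer and let A⁻, A⁺, B⁻, B⁺, K be positive real constants. Let F: (e^e, ∞) → ℝ be twice continuously differentiable and suppose that for all sufficiently large t: -A⁻·ℓ_n(t) - K·r_{n+1}(t) ≤ F''(t) ≤ A⁺·ℓ_n(t) + K·r_{n+1}(t) and -B⁻·ℓ_{n+2}(t) - K·r_{n+3}(t) ≤ F(t) ≤ B⁺·ℓ_{n+2}(t) + K·r_{n+3}(t). Then there exists a constant K' > 0 such that for all sufficiently large t, |F'(t)| ≤ [ 2(B⁺ + B⁻)·A⁺·A⁻/(A⁺ + A⁻) ]^{1/2}·ℓ_{n+1}(t) + K'·r_{n+2}(t). -/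
/-- `ℓ_k(t) = log t / (log log t)^k`. -/
noncomputable def ell (k : ℕ) (t : ℝ) : ℝ :=
  Real.log t / (Real.log (Real.log t)) ^ k

/-- `r_k(t) = log t · log log log t / (log log t)^k`. -/
noncomputable def rr (k : ℕ) (t : ℝ) : ℝ :=
  Real.log t * Real.log (Real.log (Real.log t)) / (Real.log (Real.log t)) ^ k

/-!
Taylor's formula with the one-sided bounds on `F''`, taken forward from `t` over a step `a` and
backward over a step `b`, gives `(a + b) F'(t) ≤ F(t + a) - F(t - b) + (M⁻ a² + M⁺ b²) / 2`.
Writing `x = log log t`, we have `ℓ_n = x ℓ_{n+1}` and `ℓ_{n+2} = ℓ_{n+1} / x`, so the steps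
`a = C / (x A⁻)`, `b = C / (x A⁺)`, with `C² = 2 (B⁺ + B⁻) A⁺ A⁻ / (A⁺ + A⁻)`, balance the two
sides and give `F'(t) ≤ C ℓ_{n+1}(t) + O(r_{n+2}(t))`; the same argument for `-F` gives the lower
bound. The steps are at most `1`, and on `[t - 1, t + 1]` the function `ℓ_k` moves by at most `2`
and `r_k` by a bounded factor, errors that `r_{n+2}(t)` absorbs.
-/

open Real Set Filter

lemma monotoneOn_Icc_of_hasDerivAt_nonneg {g g' : ℝ → ℝ} {a b : ℝ}
    (hg : ∀ u ∈ Icc a b, HasDerivAt g (g' u) u) (hg' : ∀ u ∈ Ioo a b, 0 ≤ g' u) :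
    MonotoneOn g (Icc a b) :=
  monotoneOn_of_hasDerivWithinAt_nonneg (convex_Icc a b)
    (fun u hu => (hg u hu).continuousAt.continuousWithinAt)
    (fun u hu => (hg u (interior_subset hu)).hasDerivWithinAt)
    (fun u hu => hg' u (by rwa [interior_Icc] at hu))

lemma hasDerivAt_sub_mul_add_sq {F f' : ℝ → ℝ} {u : ℝ} (c M : ℝ) (hF : HasDerivAt F (f' u) u) :
    HasDerivAt (fun v => F v - c * v + M * v ^ 2 / 2) (f' u - c + M * u) u :=
  ((hF.sub ((hasDerivAt_id' u).const_mul c)).add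
    (((hasDerivAt_pow 2 u).const_mul M).div_const 2)).congr_deriv (by ring)

lemma deriv_mul_le_of_neg_le_deriv2 {F f' f'' : ℝ → ℝ} {a b M : ℝ} (hab : a ≤ b)
    (hF : ∀ u ∈ Icc a b, HasDerivAt F (f' u) u) (hf' : ∀ u ∈ Icc a b, HasDerivAt f' (f'' u) u)
    (hM : ∀ u ∈ Ioo a b, -M ≤ f'' u) :
    f' a * (b - a) ≤ F b - F a + M * (b - a) ^ 2 / 2 := by
  have hmono' : MonotoneOn (fun u => f' u + M * u) (Icc a b) :=
    monotoneOn_Icc_of_hasDerivAt_nonneg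
      (fun u hu => (hf' u hu).add ((hasDerivAt_id' u).const_mul M))
      (fun u hu => by linarith [hM u hu])
  have hmono := monotoneOn_Icc_of_hasDerivAt_nonneg
      (fun u hu => hasDerivAt_sub_mul_add_sq (f' a + M * a) M (hF u hu))
      (fun u hu => by linarith [hmono' ⟨le_rfl, hab⟩ (Ioo_subset_Icc_self hu) hu.1.le])
  nlinarith [hmono ⟨le_rfl, hab⟩ ⟨hab, le_rfl⟩ hab]

lemma deriv_mul_le_of_deriv2_le {F f' f'' : ℝ → ℝ} {a b M : ℝ} (hab : a ≤ b)
    (hF : ∀ u ∈ Icc a b, HasDerivAt F (f' u) u) (hf' : ∀ u ∈ Icc a b, HasDerivAt f' (f'' u) u)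
    (hM : ∀ u ∈ Ioo a b, f'' u ≤ M) :
    f' b * (b - a) ≤ F b - F a + M * (b - a) ^ 2 / 2 := by
  have hmono' : MonotoneOn (fun u => M * u - f' u) (Icc a b) :=
    monotoneOn_Icc_of_hasDerivAt_nonneg
      (fun u hu => ((hasDerivAt_id' u).const_mul M).sub (hf' u hu))
      (fun u hu => by linarith [hM u hu])
  have hmono := monotoneOn_Icc_of_hasDerivAt_nonneg
      (fun u hu => hasDerivAt_sub_mul_add_sq (f' b - M * b) (-M) (hF u hu))
      (fun u hu => by linarith [hmono' (Ioo_subset_Icc_self hu) ⟨hab, le_rfl⟩ hu.2.le])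
  nlinarith [hmono ⟨le_rfl, hab⟩ ⟨hab, le_rfl⟩ hab]

lemma mul_deriv_le_of_deriv2_bounds {F f' f'' : ℝ → ℝ} {t a b M₁ M₂ : ℝ} (ha : 0 ≤ a) (hb : 0 ≤ b)
    (hF : ∀ u ∈ Icc (t - b) (t + a), HasDerivAt F (f' u) u)
    (hf' : ∀ u ∈ Icc (t - b) (t + a), HasDerivAt f' (f'' u) u)
    (h₁ : ∀ u ∈ Ioo t (t + a), -M₁ ≤ f'' u) (h₂ : ∀ u ∈ Ioo (t - b) t, f'' u ≤ M₂) :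
    (a + b) * f' t ≤ F (t + a) - F (t - b) + (M₁ * a ^ 2 + M₂ * b ^ 2) / 2 := by
  have hright : Icc t (t + a) ⊆ Icc (t - b) (t + a) := Icc_subset_Icc (by linarith) le_rfl
  have hleft : Icc (t - b) t ⊆ Icc (t - b) (t + a) := Icc_subset_Icc le_rfl (by linarith)
  have hfwd := deriv_mul_le_of_neg_le_deriv2 (by linarith)
    (fun u hu => hF u (hright hu)) (fun u hu => hf' u (hright hu)) h₁
  have hbwd := deriv_mul_le_of_deriv2_le (by linarith)
    (fun u hu => hF u (hleft hu)) (fun u hu => hf' u (hleft hu)) h₂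
  simp only [add_sub_cancel_left, sub_sub_cancel] at hfwd hbwd
  linarith

lemma deriv_le_of_window {F f' f'' : ℝ → ℝ} {t x ℓ r Am Ap S H C cP₁ cP₂ cQ : ℝ}
    (hAm : 0 < Am) (hAp : 0 < Ap) (hx : 0 < x) (hC : 0 < C)
    (hH : H = Am * Ap / (Am + Ap)) (hCS : C ^ 2 = 2 * S * H)
    (hxm : C / Am ≤ x) (hxp : C / Ap ≤ x)
    (hF : ∀ u ∈ Icc (t - 1) (t + 1), HasDerivAt F (f' u) u)
    (hf' : ∀ u ∈ Icc (t - 1) (t + 1), HasDerivAt f' (f'' u) u)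
    (hlo : ∀ u ∈ Icc (t - 1) (t + 1), -(Am * (ℓ * x) + cP₁ * (r * x)) ≤ f'' u)
    (hhi : ∀ u ∈ Icc (t - 1) (t + 1), f'' u ≤ Ap * (ℓ * x) + cP₂ * (r * x))
    (hosc : ∀ u ∈ Icc (t - 1) (t + 1), ∀ v ∈ Icc (t - 1) (t + 1),
      F u - F v ≤ S * (ℓ / x) + cQ * (r / x)) :
    f' t ≤ C * ℓ + (H / C * cQ + C * H * (cP₁ / Am ^ 2 + cP₂ / Ap ^ 2) / 2) * r := by
  set a := C / (x * Am) with ha_def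
  set b := C / (x * Ap) with hb_def
  have ha : 0 < a := by positivity
  have hb : 0 < b := by positivity
  have ha1 : a ≤ 1 := by rw [ha_def, div_le_one (by positivity)]; rwa [div_le_iff₀ hAm] at hxm
  have hb1 : b ≤ 1 := by rw [hb_def, div_le_one (by positivity)]; rwa [div_le_iff₀ hAp] at hxp
  have hsub : Icc (t - b) (t + a) ⊆ Icc (t - 1) (t + 1) :=
    Icc_subset_Icc (by linarith) (by linarith)
  have htaylor := mul_deriv_le_of_deriv2_bounds ha.le hb.le
    (fun u hu => hF u (hsub hu)) (fun u hu => hf' u (hsub hu))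
    (fun u hu => hlo u (hsub ⟨by linarith [hu.1], hu.2.le⟩))
    (fun u hu => hhi u (hsub ⟨hu.1.le, by linarith [hu.2]⟩))
  have hosc' := hosc (t + a) (hsub ⟨by linarith, le_rfl⟩) (t - b) (hsub ⟨le_rfl, by linarith⟩)
  have hH0 : 0 < H := by rw [hH]; positivity
  have hS : S = C ^ 2 / (2 * H) := by
    rw [hCS]; field_simp
  have hsum : a + b = C / (x * H) := by
    rw [ha_def, hb_def, hH]; field_simp; ring
  calc f' t = x * H / C * ((a + b) * f' t) := by rw [hsum]; field_simp
    _ ≤ x * H / C * (S * (ℓ / x) + cQ * (r / x) + ((Am * (ℓ * x) + cP₁ * (r * x)) * a ^ 2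
          + (Ap * (ℓ * x) + cP₂ * (r * x)) * b ^ 2) / 2) := by
      gcongr; linarith
    _ = C * ℓ + (H / C * cQ + C * H * (cP₁ / Am ^ 2 + cP₂ / Ap ^ 2) / 2) * r := by
      rw [ha_def, hb_def, hS, hH]; field_simp; ring

lemma abs_deriv_le_of_window {F f' f'' : ℝ → ℝ} {t x ℓ r Am Ap S H C cP₁ cP₂ cQ : ℝ}
    (hAm : 0 < Am) (hAp : 0 < Ap) (hx : 0 < x) (hC : 0 < C)
    (hH : H = Am * Ap / (Am + Ap)) (hCS : C ^ 2 = 2 * S * H)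
    (hxm : C / Am ≤ x) (hxp : C / Ap ≤ x)
    (hF : ∀ u ∈ Icc (t - 1) (t + 1), HasDerivAt F (f' u) u)
    (hf' : ∀ u ∈ Icc (t - 1) (t + 1), HasDerivAt f' (f'' u) u)
    (hlo : ∀ u ∈ Icc (t - 1) (t + 1), -(Am * (ℓ * x) + cP₁ * (r * x)) ≤ f'' u)
    (hhi : ∀ u ∈ Icc (t - 1) (t + 1), f'' u ≤ Ap * (ℓ * x) + cP₂ * (r * x))
    (hosc : ∀ u ∈ Icc (t - 1) (t + 1), ∀ v ∈ Icc (t - 1) (t + 1),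
      F u - F v ≤ S * (ℓ / x) + cQ * (r / x)) :
    |f' t| ≤ C * ℓ + (H / C * cQ + C * H * (cP₁ / Am ^ 2 + cP₂ / Ap ^ 2) / 2) * r := by
  have hup := deriv_le_of_window hAm hAp hx hC hH hCS hxm hxp hF hf' hlo hhi hosc
  have hdown := deriv_le_of_window (F := fun u => -F u) (f' := fun u => -f' u)
    (f'' := fun u => -f'' u) (ℓ := ℓ) (r := r)
    (cP₁ := cP₂) (cP₂ := cP₁) (cQ := cQ) hAp hAm hx hC (by rw [hH]; ring) hCS hxp hxm
    (fun u hu => (hF u hu).neg) (fun u hu => (hf' u hu).neg)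
    (fun u hu => by linarith [hhi u hu]) (fun u hu => by linarith [hlo u hu])
    (fun u hu v hv => by linarith [hosc v hv u hu])
  rw [abs_le]
  constructor <;> linarith

lemma hasDerivAt_deriv_of_contDiffOn_two {F : ℝ → ℝ} {s : Set ℝ} (hF : ContDiffOn ℝ 2 F s)
    (hs : IsOpen s) {u : ℝ} (hu : u ∈ s) :
    HasDerivAt F (deriv F u) u ∧ HasDerivAt (deriv F) (deriv (deriv F) u) u :=
  ⟨((hF.differentiableOn (by norm_num)).differentiableAt (hs.mem_nhds hu)).hasDerivAt,
    (((hF.deriv_of_isOpen hs (by norm_num : (1 : WithTop ℕ∞) + 1 ≤ 2)).differentiableOn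
      (by norm_num)).differentiableAt (hs.mem_nhds hu)).hasDerivAt⟩

lemma log_sub_log_le_div {y z : ℝ} (hy : 0 < y) (hz : 0 < z) : log y - log z ≤ (y - z) / z := by
  rw [← log_div hy.ne' hz.ne', sub_div, div_self hz.ne']
  exact log_le_sub_one_of_pos (div_pos hy hz)

lemma abs_log_sub_log_le_one {y z : ℝ} (hy : 0 < y) (hz : z ∈ Icc (y / 2) (2 * y)) :
    |log z - log y| ≤ 1 := by
  have hz0 : 0 < z := by linarith [hz.1]
  have h₁ := log_sub_log_le_div hz0 hy
  have h₂ := log_sub_log_le_div hy hz0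
  have h₃ : (z - y) / y ≤ 1 := by rw [div_le_one hy]; linarith [hz.2]
  have h₄ : (y - z) / z ≤ 1 := by rw [div_le_one hz0]; linarith [hz.1]
  rw [abs_le]; constructor <;> linarith

lemma log_mem_Icc_half_two {y z : ℝ} (hy : 0 < y) (hly : 2 ≤ log y)
    (hz : z ∈ Icc (y / 2) (2 * y)) : log z ∈ Icc (log y / 2) (2 * log y) := by
  have := abs_le.1 (abs_log_sub_log_le_one hy hz)
  constructor <;> linarith

lemma div_pow_le_div_pow_add_two (k : ℕ) {y Y z Z : ℝ} (hy : 0 < y) (hY : 2 * k ≤ Y) (hY0 : 0 < Y)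
    (hZ : 1 ≤ Z) (hz : z ≤ y + 1) (hYZ : Y - 2 / y ≤ Z) : z / Z ^ k ≤ y / Y ^ k + 2 := by
  have hYk : 0 < Y ^ k := pow_pos hY0 k
  have hZk : 1 ≤ Z ^ k := one_le_pow₀ hZ
  have htangent : Y ^ k - Z ^ k ≤ k * Y ^ k * (Y - Z) / Y := by
    have hbern := one_add_mul_le_pow (a := (Z - Y) / Y) (by
      rw [le_div_iff₀ hY0]; linarith) k
    have hZY : 1 + (Z - Y) / Y = Z / Y := by field_simp; ring
    rw [hZY, div_pow, le_div_iff₀ hYk] at hbern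
    have : k * Y ^ k * (Y - Z) / Y = -(k * ((Z - Y) / Y)) * Y ^ k := by field_simp; ring
    rw [this]; nlinarith
  have hdiff : y * (Y ^ k - Z ^ k) ≤ Y ^ k := by
    calc y * (Y ^ k - Z ^ k) ≤ y * (k * Y ^ k * (2 / y) / Y) := by
          gcongr
          calc Y ^ k - Z ^ k ≤ k * Y ^ k * (Y - Z) / Y := htangent
            _ ≤ k * Y ^ k * (2 / y) / Y := by gcongr; linarith
      _ = 2 * k / Y * Y ^ k := by field_simp
      _ ≤ Y ^ k := by
          apply mul_le_of_le_one_left hYk.le; rw [div_le_one hY0]; exact hY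
  rw [div_add' _ _ _ hYk.ne', div_le_div_iff₀ (by positivity) hYk]
  nlinarith

lemma ell_succ (k : ℕ) (t : ℝ) : ell (k + 1) t = ell k t / log (log t) := by
  unfold ell; rw [pow_succ, div_div]

lemma rr_succ (k : ℕ) (t : ℝ) : rr (k + 1) t = rr k t / log (log t) := by
  unfold rr; rw [pow_succ, div_div]

lemma ell_eq_ell_succ_mul {k : ℕ} {t : ℝ} (ht : log (log t) ≠ 0) :
    ell k t = ell (k + 1) t * log (log t) := by
  rw [ell_succ, div_mul_cancel₀ _ ht]

lemma rr_eq_rr_succ_mul {k : ℕ} {t : ℝ} (ht : log (log t) ≠ 0) :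
    rr k t = rr (k + 1) t * log (log t) := by
  rw [rr_succ, div_mul_cancel₀ _ ht]

lemma logs_mem_Icc_of_mem_window {t u : ℝ} (ht : 2 ≤ t) (hL : 2 ≤ log t)
    (hLL : 2 ≤ log (log t)) (hu : u ∈ Icc (t - 1) (t + 1)) :
    log u ∈ Icc (log t / 2) (2 * log t) ∧
      log (log u) ∈ Icc (log (log t) / 2) (2 * log (log t)) := by
  have h₁ := log_mem_Icc_half_two (z := u) (by linarith) hL ⟨by linarith [hu.1], by linarith [hu.2]⟩
  exact ⟨h₁, log_mem_Icc_half_two (by linarith) hLL h₁⟩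

lemma ell_le_add_two_of_mem_window (k : ℕ) {t u : ℝ} (ht : 2 ≤ t) (hL : 2 ≤ log t)
    (hLL : 2 ≤ log (log t)) (hk : 2 * k ≤ log (log t)) (hu : u ∈ Icc (t - 1) (t + 1)) :
    ell k u ≤ ell k t + 2 := by
  obtain ⟨hLu, hLLu⟩ := logs_mem_Icc_of_mem_window ht hL hLL hu
  have hLu0 : 0 < log u := by linarith [hLu.1]
  have hL_sub : |log u - log t| ≤ 1 :=
    abs_log_sub_log_le_one (by linarith) ⟨by linarith [hu.1], by linarith [hu.2]⟩
  have hLL_sub : log (log t) - log (log u) ≤ 2 / log t :=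
    calc log (log t) - log (log u) ≤ (log t - log u) / log u :=
          log_sub_log_le_div (by linarith) hLu0
      _ ≤ 1 / (log t / 2) := by
          gcongr
          · linarith [(abs_le.1 hL_sub).1]
          · exact hLu.1
      _ = 2 / log t := by field_simp
  exact div_pow_le_div_pow_add_two k (by linarith) hk (by linarith) (by linarith [hLLu.1])
    (by linarith [(abs_le.1 hL_sub).2]) (by linarith)

lemma rr_le_of_mem_window (k : ℕ) {t u : ℝ} (ht : 2 ≤ t) (hL : 2 ≤ log t)
    (hLL : 2 ≤ log (log t)) (hLLL : 2 ≤ log (log (log t))) (hu : u ∈ Icc (t - 1) (t + 1)) :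
    rr k u ≤ 2 ^ (k + 2) * rr k t := by
  obtain ⟨hLu, hLLu⟩ := logs_mem_Icc_of_mem_window ht hL hLL hu
  have hLLLu := log_mem_Icc_half_two (by linarith) hLLL hLLu
  calc rr k u ≤ 2 * log t * (2 * log (log (log t))) / (log (log t) / 2) ^ k := by
        unfold rr
        gcongr <;> linarith [hLu.1, hLu.2, hLLu.1, hLLLu.1, hLLLu.2]
    _ = 2 ^ (k + 2) * rr k t := by unfold rr; rw [div_pow]; field_simp; ring

lemma tendsto_log_log_atTop : Tendsto (fun t => log (log t)) atTop atTop :=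
  tendsto_log_atTop.comp tendsto_log_atTop

lemma eventually_two_le_iterated_log :
    ∀ᶠ t in atTop, 2 ≤ t ∧ 2 ≤ log t ∧ 2 ≤ log (log t) ∧ 2 ≤ log (log (log t)) :=
  (eventually_ge_atTop 2).and <| (tendsto_log_atTop.eventually_ge_atTop 2).and <|
    (tendsto_log_log_atTop.eventually_ge_atTop 2).and <|
      (tendsto_log_atTop.comp tendsto_log_log_atTop).eventually_ge_atTop 2

lemma eventually_forall_window {p : ℝ → Prop} (h : ∀ᶠ u in atTop, p u) :
    ∀ᶠ t in atTop, ∀ u ∈ Icc (t - 1) (t + 1), p u := by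
  obtain ⟨T, hT⟩ := eventually_atTop.1 h
  exact eventually_atTop.2 ⟨T + 1, fun t ht u hu => hT u (by linarith [hu.1])⟩

lemma eventually_log_log_le_rr (k : ℕ) : ∀ᶠ t in atTop, log (log t) ≤ rr k t := by
  have hpow : ∀ᶠ t in atTop, log (log t) ^ (k + 1) ≤ log t := by
    filter_upwards [(isLittleO_pow_log_id_atTop.comp_tendsto tendsto_log_atTop).bound one_pos,
      tendsto_log_atTop.eventually_ge_atTop 0] with t h hL
    simp only [Function.comp_apply, id, Real.norm_eq_abs, one_mul] at h
    exact (le_abs_self _).trans (h.trans (abs_of_nonneg hL).le)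
  filter_upwards [hpow, eventually_two_le_iterated_log] with t h ⟨_, hL, hLL, hLLL⟩
  unfold rr
  rw [le_div_iff₀ (by positivity), ← pow_succ']
  nlinarith

lemma eventually_window_le {g : ℝ → ℝ} {A K : ℝ} (k : ℕ) (hA : 0 ≤ A) (hK : 0 ≤ K)
    (h : ∀ᶠ t in atTop, g t ≤ A * ell k t + K * rr (k + 1) t) :
    ∀ᶠ t in atTop, ∀ u ∈ Icc (t - 1) (t + 1),
      g u ≤ A * ell k t + (2 * A + 2 ^ (k + 3) * K) * rr (k + 1) t := by
  filter_upwards [eventually_forall_window h, eventually_two_le_iterated_log,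
    tendsto_log_log_atTop.eventually_ge_atTop (2 * k), eventually_log_log_le_rr (k + 1)]
    with t hg ⟨ht, hL, hLL, hLLL⟩ hk hr u hu
  calc g u ≤ A * ell k u + K * rr (k + 1) u := hg u hu
    _ ≤ A * (ell k t + 2) + K * (2 ^ (k + 1 + 2) * rr (k + 1) t) := by
        gcongr
        · exact ell_le_add_two_of_mem_window k ht hL hLL hk hu
        · exact rr_le_of_mem_window (k + 1) ht hL hLL hLLL hu
    _ ≤ A * ell k t + (2 * A + 2 ^ (k + 3) * K) * rr (k + 1) t := by
        rw [show k + 1 + 2 = k + 3 by ring]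
        nlinarith

lemma eventually_window_bounds {g : ℝ → ℝ} {Am Ap K : ℝ} (k : ℕ) (hAm : 0 ≤ Am) (hAp : 0 ≤ Ap)
    (hK : 0 ≤ K) (h : ∃ T, ∀ t : ℝ, T ≤ t →
      -Am * ell k t - K * rr (k + 1) t ≤ g t ∧ g t ≤ Ap * ell k t + K * rr (k + 1) t) :
    ∀ᶠ t in atTop, ∀ u ∈ Icc (t - 1) (t + 1),
      -(Am * ell k t + (2 * Am + 2 ^ (k + 3) * K) * rr (k + 1) t) ≤ g u ∧
        g u ≤ Ap * ell k t + (2 * Ap + 2 ^ (k + 3) * K) * rr (k + 1) t := by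
  obtain ⟨T, hT⟩ := h
  filter_upwards [eventually_window_le (g := fun t => -g t) k hAm hK
      (eventually_atTop.2 ⟨T, fun t ht => by linarith [(hT t ht).1]⟩),
    eventually_window_le k hAp hK (eventually_atTop.2 ⟨T, fun t ht => (hT t ht).2⟩)]
    with t hlo hhi u hu
  exact ⟨by linarith [hlo u hu], hhi u hu⟩

theorem stmt_17_general (n : ℕ) (Am Ap Bm Bp K : ℝ)
    (hAm : 0 < Am) (hAp : 0 < Ap) (hBm : 0 < Bm) (hBp : 0 < Bp) (hK : 0 < K)
    (F : ℝ → ℝ)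
    (hF : ContDiffOn ℝ 2 F (Set.Ioi (Real.exp (Real.exp 1))))
    (hF'' : ∃ T, ∀ t : ℝ, T ≤ t →
      -Am * ell n t - K * rr (n + 1) t ≤ deriv (deriv F) t ∧
      deriv (deriv F) t ≤ Ap * ell n t + K * rr (n + 1) t)
    (hFb : ∃ T, ∀ t : ℝ, T ≤ t →
      -Bm * ell (n + 2) t - K * rr (n + 3) t ≤ F t ∧
      F t ≤ Bp * ell (n + 2) t + K * rr (n + 3) t) :
    ∃ K' > 0, ∃ T', ∀ t : ℝ, T' ≤ t →
      |deriv F t| ≤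
        Real.sqrt (2 * (Bp + Bm) * Ap * Am / (Ap + Am)) * ell (n + 1) t
          + K' * rr (n + 2) t := by
  set C := √(2 * (Bp + Bm) * Ap * Am / (Ap + Am)) with hC_def
  set H := Am * Ap / (Am + Ap)
  have hC : 0 < C := sqrt_pos.2 (by positivity)
  have hCS : C ^ 2 = 2 * (Bp + Bm) * H := by rw [hC_def, sq_sqrt (by positivity)]; ring
  refine ⟨H / C * (2 * (Bp + Bm) + 2 ^ (n + 6) * K) + C * H * ((2 * Am + 2 ^ (n + 3) * K) / Am ^ 2
    + (2 * Ap + 2 ^ (n + 3) * K) / Ap ^ 2) / 2, by positivity, eventually_atTop.1 ?_⟩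
  filter_upwards [eventually_window_bounds n hAm.le hAp.le hK.le hF'',
    eventually_window_bounds (n + 2) hBm.le hBp.le hK.le hFb,
    eventually_forall_window (eventually_gt_atTop (exp (exp 1))),
    tendsto_log_log_atTop.eventually_ge_atTop 1, tendsto_log_log_atTop.eventually_ge_atTop (C / Am),
    tendsto_log_log_atTop.eventually_ge_atTop (C / Ap)] with t hF₂ hF₀ hder hx hxm hxp
  have hx0 : 0 < log (log t) := by linarith
  rw [ell_eq_ell_succ_mul hx0.ne', rr_eq_rr_succ_mul hx0.ne'] at hF₂
  rw [ell_succ (n + 1), rr_succ (n + 2)] at hF₀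
  have hpow : (2 : ℝ) ^ (n + 6) = 2 * 2 ^ (n + 2 + 3) := by ring
  exact abs_deriv_le_of_window hAm hAp hx0 hC rfl hCS hxm hxp
    (fun u hu => (hasDerivAt_deriv_of_contDiffOn_two hF isOpen_Ioi (hder u hu)).1)
    (fun u hu => (hasDerivAt_deriv_of_contDiffOn_two hF isOpen_Ioi (hder u hu)).2)
    (fun u hu => (hF₂ u hu).1) (fun u hu => (hF₂ u hu).2)
    (fun u hu v hv => by rw [hpow]; linarith [(hF₀ u hu).2, (hF₀ v hv).1])

theorem stmt_17 (n : ℕ) (hn : 2 ≤ n) (Am Ap Bm Bp K : ℝ)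
    (hAm : 0 < Am) (hAp : 0 < Ap) (hBm : 0 < Bm) (hBp : 0 < Bp) (hK : 0 < K)
    (F : ℝ → ℝ)
    (hF : ContDiffOn ℝ 2 F (Set.Ioi (Real.exp (Real.exp 1))))
    (hF'' : ∃ T, ∀ t : ℝ, T ≤ t →
      -Am * ell n t - K * rr (n + 1) t ≤ deriv (deriv F) t ∧
      deriv (deriv F) t ≤ Ap * ell n t + K * rr (n + 1) t)
    (hFb : ∃ T, ∀ t : ℝ, T ≤ t →
      -Bm * ell (n + 2) t - K * rr (n + 3) t ≤ F t ∧
      F t ≤ Bp * ell (n + 2) t + K * rr (n + 3) t) :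
    ∃ K' > 0, ∃ T', ∀ t : ℝ, T' ≤ t →
      |deriv F t| ≤
        Real.sqrt (2 * (Bp + Bm) * Ap * Am / (Ap + Am)) * ell (n + 1) t
          + K' * rr (n + 2) t :=
  stmt_17_general n Am Ap Bm Bp K hAm hAp hBm hBp hK F hF hF'' hFb
end
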